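/- arXiv:0909.4890 — 2 statements merged into one kernel-verified Lean document; each statement's English description precedes it below -/
import Mathlib

section
/- For every integer n ≥ 2, every ε ∈ (0,1), and every μ > 0, there exists at least one x > 1 with h(x, ε) = μ (at least one rosette central configuration with x > 1). -/
/-- `k_n = (1/(4n)) · Σ_{k=1}^{n-1} 1/sin(kπ/n)` -/
noncomputable def kn (n : ℕ) : ℝ :=
  (1 / (4 * n)) * ∑ k ∈ Finset.Icc 1 (n - 1), 1 / Real.sin (k * Real.pi / n)

/-- `φ_k = (2k-1)π/n`, and `u_k = cos φ_k`. -/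
noncomputable def phi (n k : ℕ) : ℝ := (2 * (k : ℝ) - 1) * Real.pi / n

/-- The reduced central configuration function
`h(x, ε) = −n·k_n·(ε−x³)/(1−x³) − (x²/(1−x³))·Σ_{k=1}^{n} [x(1−ε) − (1−εx²)u_k]/(1+x²−2xu_k)^{3/2}`,
where `u_k = cos φ_k`.  Solutions of `h(x, ε) = μ` are the rosette central configurations. -/
noncomputable def h (n : ℕ) (x ε : ℝ) : ℝ :=
  -((n : ℝ) * kn n) * (ε - x ^ 3) / (1 - x ^ 3) -
    (x ^ 2 / (1 - x ^ 3)) * ∑ k ∈ Finset.Icc 1 n,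
      (x * (1 - ε) - (1 - ε * x ^ 2) * Real.cos (phi n k)) /
        (1 + x ^ 2 - 2 * x * Real.cos (phi n k)) ^ ((3 : ℝ) / 2)

/-! For `x > 1` one has `h(x, ε) = -n kₙ + N(x) / (x³ - 1)` with `N` continuous on `(0, ∞)`.
Each summand of `h` is bounded for `x ≥ 2`, so `h(x, ε) → -n kₙ ≤ 0` as `x → ∞`.
At `x = 1` the `k`-th summand equals `(1 - ε) / (4 sin (φ_k / 2))`, whence
`N(1) = (1 - ε)/4 · (Σ_j csc ((2j-1)π/(2n)) - Σ_k csc (kπ/n)) > 0`: the odd cosecants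
dominate the even ones termwise after an injective matching. So `h(x, ε) → +∞` as
`x → 1⁺`, and every `μ > -n kₙ` is a value of `h(·, ε)` on `(1, ∞)` by the intermediate value
theorem. -/

open Real Filter Finset Topology

theorem Real.sin_lt_sin_of_abs_sub_pi_div_two_lt {α β : ℝ} (hα : |α - π / 2| ≤ π)
    (h : |β - π / 2| < |α - π / 2|) : sin α < sin β := by
  simpa only [cos_abs, cos_sub_pi_div_two] using
    cos_lt_cos_of_nonneg_of_le_pi (abs_nonneg _) hα h

lemma Real.cos_eq_one_sub_two_mul_sin_half_sq (θ : ℝ) : cos θ = 1 - 2 * sin (θ / 2) ^ 2 := by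
  rw [← cos_two_mul_eq_one_sub, mul_div_cancel₀ _ two_ne_zero]

lemma sin_mul_pi_div_pos {N a : ℝ} (ha : 0 < a) (haN : a < N) : 0 < sin (a * π / N) := by
  have hN : 0 < N := ha.trans haN
  refine sin_pos_of_pos_of_lt_pi (by positivity) ?_
  rw [div_lt_iff₀ hN]
  nlinarith [pi_pos]

lemma one_div_sin_lt_one_div_sin {N a b : ℝ} (ha : |a - N| < N) (hab : |b - N| < |a - N|) :
    1 / sin (b * π / (2 * N)) < 1 / sin (a * π / (2 * N)) := by
  have hN : 0 < N := (abs_nonneg _).trans_lt ha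
  have hscale : 0 < π / (2 * N) := by positivity
  have hshift : ∀ c : ℝ, |c * π / (2 * N) - π / 2| = |c - N| * (π / (2 * N)) := fun c => by
    rw [← abs_of_pos hscale, ← abs_mul]
    congr 1
    field_simp
  obtain ⟨ha₁, ha₂⟩ := abs_lt.1 ha
  refine one_div_lt_one_div_of_lt (sin_mul_pi_div_pos (by linarith) (by linarith))
    (Real.sin_lt_sin_of_abs_sub_pi_div_two_lt ?_ ?_)
  · rw [hshift]
    calc |a - N| * (π / (2 * N)) ≤ 2 * N * (π / (2 * N)) := by gcongr; linarith
      _ = π := by field_simp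
  · rw [hshift, hshift]
    exact mul_lt_mul_of_pos_right hab hscale

lemma sum_one_div_sin_lt_sum_one_div_sin_odd {n : ℕ} (hn : 2 ≤ n) :
    ∑ k ∈ Icc 1 (n - 1), 1 / sin (k * π / n) <
      ∑ j ∈ Icc 1 n, 1 / sin ((2 * j - 1) * π / (2 * n)) := by
  -- `kπ/n` is matched with the odd multiple of `π/(2n)` next to it on the side away from `π/2`
  set σ : ℕ → ℕ := fun k => if 2 * k ≤ n then k else k + 1 with hσ
  have hσ_maps : ∀ k ∈ Icc 1 (n - 1), σ k ∈ Icc 1 n := by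
    intro k hk
    simp only [mem_Icc, hσ] at hk ⊢
    split_ifs <;> omega
  have hσ_inj : Set.InjOn σ (Icc 1 (n - 1)) := by
    intro a _ b _ hab
    simp only [hσ] at hab
    split_ifs at hab <;> omega
  have hσ_lt : ∀ k ∈ Icc 1 (n - 1),
      1 / sin (k * π / n) < 1 / sin ((2 * (σ k : ℝ) - 1) * π / (2 * n)) := by
    intro k hk
    simp only [mem_Icc] at hk
    have hdist :
        |2 * (σ k : ℤ) - 1 - n| < n ∧ |2 * (k : ℤ) - n| < |2 * (σ k : ℤ) - 1 - n| := by
      simp only [hσ, abs_eq_max_neg]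
      split_ifs <;> omega
    rw [show (k : ℝ) * π / n = 2 * k * π / (2 * n) by field_simp]
    exact one_div_sin_lt_one_div_sin (by exact_mod_cast hdist.1) (by exact_mod_cast hdist.2)
  have hodd_nonneg : ∀ j ∈ Icc 1 n, 0 ≤ 1 / sin ((2 * (j : ℝ) - 1) * π / (2 * n)) := by
    intro j hj
    simp only [mem_Icc] at hj
    have hj₁ : (1 : ℝ) ≤ j := by exact_mod_cast hj.1
    have hjn : (j : ℝ) ≤ n := by exact_mod_cast hj.2
    exact (one_div_pos.2 (sin_mul_pi_div_pos (by linarith) (by linarith))).le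
  calc ∑ k ∈ Icc 1 (n - 1), 1 / sin (k * π / n)
      < ∑ k ∈ Icc 1 (n - 1), 1 / sin ((2 * (σ k : ℝ) - 1) * π / (2 * n)) :=
        sum_lt_sum_of_nonempty ⟨1, by simp only [mem_Icc]; omega⟩ hσ_lt
    _ = ∑ j ∈ (Icc 1 (n - 1)).image σ, 1 / sin ((2 * (j : ℝ) - 1) * π / (2 * n)) := by
        rw [sum_image hσ_inj]
    _ ≤ ∑ j ∈ Icc 1 n, 1 / sin ((2 * j - 1) * π / (2 * n)) :=
        sum_le_sum_of_subset_of_nonneg (image_subset_iff.2 hσ_maps) fun j hj _ => hodd_nonneg j hj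

lemma kn_nonneg (n : ℕ) : 0 ≤ kn n := by
  refine mul_nonneg (by positivity) (sum_nonneg fun k hk => ?_)
  simp only [mem_Icc] at hk
  have hk₁ : (1 : ℝ) ≤ k := by exact_mod_cast hk.1
  have hkn : (k : ℝ) + 1 ≤ n := by exact_mod_cast (by omega : k + 1 ≤ n)
  exact (one_div_pos.2 (sin_mul_pi_div_pos (by linarith) (by linarith))).le

lemma natCast_mul_kn {n : ℕ} (hn : n ≠ 0) :
    n * kn n = (∑ k ∈ Icc 1 (n - 1), 1 / sin (k * π / n)) / 4 := by
  have : (n : ℝ) ≠ 0 := Nat.cast_ne_zero.2 hn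
  rw [kn]
  generalize ∑ k ∈ Icc 1 (n - 1), 1 / sin (k * π / n) = S
  field_simp

lemma tendsto_sq_div_cube_sub_one_atTop :
    Tendsto (fun x : ℝ => x ^ 2 / (x ^ 3 - 1)) atTop (𝓝 0) := by
  have h2x : Tendsto (fun x : ℝ => 2 / x) atTop (𝓝 0) :=
    tendsto_const_nhds.div_atTop tendsto_id
  refine squeeze_zero' ?_ ?_ h2x <;> filter_upwards [eventually_ge_atTop 2] with x hx
  all_goals have hx₃ : (2 : ℝ) ^ 3 ≤ x ^ 3 := pow_le_pow_left₀ (by norm_num) hx 3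
  · have : 0 < x ^ 3 - 1 := by linarith
    positivity
  · rw [div_le_div_iff₀ (by linarith) (by linarith)]
    nlinarith

noncomputable def rosetteTerm (ε x u : ℝ) : ℝ :=
  (x * (1 - ε) - (1 - ε * x ^ 2) * u) / (1 + x ^ 2 - 2 * x * u) ^ ((3 : ℝ) / 2)

section rosetteTerm

variable {ε x u : ℝ}

lemma rosetteTerm_one_cos {θ : ℝ} (hθ : 0 < sin (θ / 2)) :
    rosetteTerm ε 1 (cos θ) = (1 - ε) / (4 * sin (θ / 2)) := by
  have hden : (1 + 1 ^ 2 - 2 * 1 * cos θ) ^ ((3 : ℝ) / 2) = (2 * sin (θ / 2)) ^ 3 := by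
    have hbase : 1 + 1 ^ 2 - 2 * 1 * cos θ = (2 * sin (θ / 2)) ^ (2 : ℕ) := by
      rw [cos_eq_one_sub_two_mul_sin_half_sq]; ring
    rw [hbase, ← rpow_natCast, ← rpow_mul (by positivity)]
    norm_num
  rw [rosetteTerm, hden, cos_eq_one_sub_two_mul_sin_half_sq]
  field_simp
  ring

lemma abs_rosetteTerm_le (hε : ε ∈ Set.Icc 0 1) (hu : |u| ≤ 1) (hx : 2 ≤ x) :
    |rosetteTerm ε x u| ≤ 8 := by
  obtain ⟨hu₁, hu₂⟩ := abs_le.1 hu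
  have hD : x ^ 2 / 4 ≤ 1 + x ^ 2 - 2 * x * u := by nlinarith
  have hD₁ : 1 ≤ 1 + x ^ 2 - 2 * x * u := by nlinarith
  have hden : x ^ 2 / 4 ≤ (1 + x ^ 2 - 2 * x * u) ^ ((3 : ℝ) / 2) :=
    hD.trans <| by simpa using rpow_le_rpow_of_exponent_le hD₁ (by norm_num : (1 : ℝ) ≤ 3 / 2)
  have hnum : |x * (1 - ε) - (1 - ε * x ^ 2) * u| ≤ 2 * x ^ 2 := by
    rw [abs_le]
    constructor <;> nlinarith [mul_nonneg hε.1 (sub_nonneg.2 hu₂),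
      mul_nonneg hε.1 (neg_le_iff_add_nonneg.1 hu₁),
      mul_nonneg (sub_nonneg.2 hε.2) (by linarith : (0 : ℝ) ≤ x)]
  rw [rosetteTerm, abs_div, abs_of_pos (rpow_pos_of_pos (by linarith) _)]
  calc _ ≤ 2 * x ^ 2 / (x ^ 2 / 4) := div_le_div₀ (by positivity) hnum (by positivity) hden
    _ = 8 := by field_simp; ring

lemma continuousOn_rosetteTerm (hu : u < 1) :
    ContinuousOn (fun x => rosetteTerm ε x u) (Set.Ioi 0) := by
  have hD : ∀ x ∈ Set.Ioi (0 : ℝ), 0 < 1 + x ^ 2 - 2 * x * u := fun x (hx : 0 < x) => by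
    nlinarith [sq_nonneg (x - 1), mul_pos hx (sub_pos.2 hu)]
  have hcont : Continuous fun x : ℝ => 1 + x ^ 2 - 2 * x * u := by fun_prop
  exact ContinuousOn.div (by fun_prop)
    (hcont.continuousOn.rpow_const fun _ _ => Or.inr (by norm_num))
    fun x hx => (rpow_pos_of_pos (hD x hx) _).ne'

end rosetteTerm

noncomputable def rosetteSum (n : ℕ) (ε x : ℝ) : ℝ :=
  ∑ k ∈ Icc 1 n, rosetteTerm ε x (cos (phi n k))

noncomputable def rosetteNum (n : ℕ) (ε x : ℝ) : ℝ :=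
  n * kn n * (ε - 1) + x ^ 2 * rosetteSum n ε x

section rosette

variable {n : ℕ} {ε x : ℝ}

lemma h_eq_add_div (hx : x ^ 3 ≠ 1) :
    h n x ε = -(n * kn n) + rosetteNum n ε x / (x ^ 3 - 1) := by
  have h₁ : 1 - x ^ 3 ≠ 0 := sub_ne_zero.2 (Ne.symm hx)
  have h₂ : x ^ 3 - 1 ≠ 0 := sub_ne_zero.2 hx
  change -((n : ℝ) * kn n) * (ε - x ^ 3) / (1 - x ^ 3) -
    x ^ 2 / (1 - x ^ 3) * rosetteSum n ε x = _
  rw [rosetteNum]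
  field_simp
  ring

lemma phi_div_two {k : ℕ} : phi n k / 2 = (2 * k - 1) * π / (2 * n) := by
  rw [phi]; ring

lemma sin_phi_div_two_pos {k : ℕ} (hk : k ∈ Icc 1 n) : 0 < sin (phi n k / 2) := by
  simp only [mem_Icc] at hk
  have hk₁ : (1 : ℝ) ≤ k := by exact_mod_cast hk.1
  have hkn : (k : ℝ) ≤ n := by exact_mod_cast hk.2
  rw [phi_div_two]
  exact sin_mul_pi_div_pos (by linarith) (by linarith)

lemma cos_phi_lt_one {k : ℕ} (hk : k ∈ Icc 1 n) : cos (phi n k) < 1 := by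
  rw [cos_eq_one_sub_two_mul_sin_half_sq]
  nlinarith [sin_phi_div_two_pos hk]

lemma rosetteSum_one :
    rosetteSum n ε 1 = (1 - ε) / 4 * ∑ j ∈ Icc 1 n, 1 / sin ((2 * j - 1) * π / (2 * n)) := by
  rw [rosetteSum, mul_sum]
  refine sum_congr rfl fun k hk => ?_
  rw [rosetteTerm_one_cos (sin_phi_div_two_pos hk), phi_div_two]
  ring

lemma rosetteNum_one_pos (hn : 2 ≤ n) (hε : ε < 1) : 0 < rosetteNum n ε 1 := by
  have hsum := sum_one_div_sin_lt_sum_one_div_sin_odd hn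
  rw [rosetteNum, rosetteSum_one, natCast_mul_kn (by omega)]
  nlinarith

lemma continuousOn_rosetteNum : ContinuousOn (rosetteNum n ε) (Set.Ioi 0) := by
  have hsum : ContinuousOn (rosetteSum n ε) (Set.Ioi 0) :=
    continuousOn_finsetSum _ fun k hk => continuousOn_rosetteTerm (cos_phi_lt_one hk)
  exact continuousOn_const.add ((continuous_pow 2).continuousOn.mul hsum)

lemma abs_rosetteSum_le (hε : ε ∈ Set.Icc 0 1) (hx : 2 ≤ x) : |rosetteSum n ε x| ≤ 8 * n :=
  calc |rosetteSum n ε x| ≤ ∑ k ∈ Icc 1 n, |rosetteTerm ε x (cos (phi n k))| :=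
        abs_sum_le_sum_abs _ _
    _ ≤ #(Icc 1 n) • (8 : ℝ) :=
        sum_le_card_nsmul _ _ _ fun k _ => abs_rosetteTerm_le hε (abs_cos_le_one _) hx
    _ = 8 * n := by simp [mul_comm]

lemma continuousOn_h : ContinuousOn (h n · ε) (Set.Ioi 1) := by
  have hcube : ∀ x ∈ Set.Ioi (1 : ℝ), x ^ 3 ≠ 1 := fun x (hx : 1 < x) =>
    (one_lt_pow₀ hx three_ne_zero).ne'
  refine ContinuousOn.congr ?_ fun x hx => h_eq_add_div (hcube x hx)
  refine continuousOn_const.add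
    (ContinuousOn.div ?_ (by fun_prop) fun x hx => sub_ne_zero.2 (hcube x hx))
  exact continuousOn_rosetteNum.mono fun x (hx : 1 < x) => zero_lt_one.trans hx

lemma tendsto_h_nhdsGT_one (hn : 2 ≤ n) (hε : ε < 1) :
    Tendsto (h n · ε) (𝓝[>] 1) atTop := by
  have hnum : Tendsto (rosetteNum n ε) (𝓝[>] 1) (𝓝 (rosetteNum n ε 1)) :=
    (continuousOn_rosetteNum.continuousAt (Ioi_mem_nhds one_pos)).tendsto.mono_left
      nhdsWithin_le_nhds
  have hcube : Tendsto (fun x : ℝ => x ^ 3 - 1) (𝓝[>] 1) (𝓝[>] 0) := by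
    refine tendsto_nhdsWithin_iff.2 ⟨?_, eventually_nhdsWithin_of_forall
      fun x (hx : 1 < x) => sub_pos.2 (one_lt_pow₀ hx three_ne_zero)⟩
    have : Tendsto (fun x : ℝ => x ^ 3 - 1) (𝓝 1) (𝓝 (1 ^ 3 - 1)) :=
      ((continuous_pow 3).sub continuous_const).tendsto 1
    simpa using this.mono_left nhdsWithin_le_nhds
  have hdiv : Tendsto (fun x => rosetteNum n ε x / (x ^ 3 - 1)) (𝓝[>] 1) atTop := by
    have hinv : Tendsto (fun x : ℝ => (x ^ 3 - 1)⁻¹) (𝓝[>] 1) atTop :=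
      tendsto_inv_nhdsGT_zero.comp hcube
    simpa only [div_eq_mul_inv] using hnum.pos_mul_atTop (rosetteNum_one_pos hn hε) hinv
  refine (tendsto_atTop_add_const_left _ (-(n * kn n)) hdiv).congr' ?_
  filter_upwards [self_mem_nhdsWithin] with x (hx : 1 < x)
  exact (h_eq_add_div (one_lt_pow₀ hx three_ne_zero).ne').symm

lemma tendsto_h_atTop (hε : ε ∈ Set.Icc 0 1) :
    Tendsto (h n · ε) atTop (𝓝 (-(n * kn n))) := by
  have hcube : Tendsto (fun x : ℝ => x ^ 3 - 1) atTop atTop :=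
    tendsto_atTop_add_const_right _ _ (tendsto_pow_atTop three_ne_zero)
  have hconst : Tendsto (fun x : ℝ => n * kn n * (ε - 1) / (x ^ 3 - 1)) atTop (𝓝 0) :=
    tendsto_const_nhds.div_atTop hcube
  have hbdd : IsBoundedUnder (· ≤ ·) atTop ((‖·‖) ∘ rosetteSum n ε) :=
    isBoundedUnder_of_eventually_le (a := 8 * (n : ℝ))
      ((eventually_ge_atTop 2).mono fun x hx => abs_rosetteSum_le hε hx)
  have hlim := ((hconst.add (tendsto_sq_div_cube_sub_one_atTop.zero_mul_isBoundedUnder_le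
    hbdd)).const_add (-(n * kn n)))
  rw [add_zero, add_zero] at hlim
  refine hlim.congr' ?_
  filter_upwards [eventually_gt_atTop 1] with x hx
  rw [h_eq_add_div (one_lt_pow₀ hx three_ne_zero).ne', rosetteNum]
  ring

end rosette

/-- For `n ≥ 2`, `ε ∈ (0,1)`, `μ > 0` there is at least one rosette central
configuration with `x > 1`. -/
theorem exists_cc_gt_one (n : ℕ) (hn : 2 ≤ n) (ε μ : ℝ) (hε : ε ∈ Set.Ioo (0 : ℝ) 1)
    (hμ : 0 < μ) : ∃ x : ℝ, 1 < x ∧ h n x ε = μ := by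
  have hμ' : μ ∈ Set.Ioi (-(n * kn n)) :=
    (neg_nonpos.2 (mul_nonneg n.cast_nonneg (kn_nonneg n))).trans_lt hμ
  exact isPreconnected_Ioi.intermediate_value_Ioi (l₂ := 𝓝[>] 1)
    (le_principal_iff.2 (Ioi_mem_atTop 1)) (le_principal_iff.2 self_mem_nhdsWithin) continuousOn_h
    (tendsto_h_atTop (Set.Ioo_subset_Icc_self hε)) (tendsto_h_nhdsGT_one hn hε.2) hμ'
end

section
/- For every integer n ≥ 2 and every ε ∈ (0,1), there exists μ̂ > 0 such that for every μ > μ̂ the equation h(x, ε) = μ has exactly one solution x ∈ (1, ∞). -/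
/-!
For `x > 1` the equation `h x = μ` says `G x := F x + μ (x³ - 1) = 0`, where `F = (1 - x³) h` is
smooth on `(0, ∞)`. Once `μ` is large, `G` has exactly one zero in `(1, ∞)`:
* `G 1 = F 1 = (1 - ε) / 4 · (∑_{0<j<n} 1 / sin (jπ/n) - ∑_k 1 / sin (φ_k / 2)) < 0`,
  since `jπ/n` is the midpoint of `φ_j / 2` and `φ_{j+1} / 2` and `1 / sin` is convex on `(0, π)`;
* the sum in `h` is bounded on `[0, ∞)`, so `G > 0` on `[2, ∞)` when `μ` exceeds that bound;
* `F` is Lipschitz on `[1, 2]` while `x³` has slope at least `3` there, so `G` is strictly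
  increasing on `[1, 2]` when `3μ` exceeds the Lipschitz constant.
-/

open Real Set

theorem Finset.sum_Icc_add_add_one {M : Type*} [AddCommMonoid M] (a : ℕ → M) (m : ℕ) :
    ∑ j ∈ Finset.Icc 1 m, (a j + a (j + 1)) + a 1 + a (m + 1) =
      ∑ j ∈ Finset.Icc 1 (m + 1), a j + ∑ j ∈ Finset.Icc 1 (m + 1), a j := by
  induction m with
  | zero => simp
  | succ m ih =>
    rw [Finset.sum_Icc_succ_top (by omega), Finset.sum_Icc_succ_top (by omega : 1 ≤ m + 2)]
    calc _ = (∑ j ∈ Finset.Icc 1 m, (a j + a (j + 1)) + a 1 + a (m + 1)) + a (m + 1 + 1)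
          + a (m + 1 + 1) := by abel
      _ = _ := by rw [ih]; abel

theorem existsUnique_zero_of_strictMonoOn {g : ℝ → ℝ} {a b : ℝ} (hab : a ≤ b)
    (hcont : ContinuousOn g (Icc a b)) (hmono : StrictMonoOn g (Icc a b)) (ha : g a < 0)
    (hb : ∀ x, b ≤ x → 0 < g x) : ∃! x, x ∈ Ioi a ∧ g x = 0 := by
  have hlt : ∀ x, a < x → g x = 0 → x ∈ Icc a b := fun x hax hx =>
    ⟨hax.le, le_of_not_ge fun hbx => (hb x hbx).ne' hx⟩
  obtain ⟨x, hx, hgx⟩ := intermediate_value_Icc hab hcont ⟨ha.le, (hb b le_rfl).le⟩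
  have hax : a < x := lt_of_le_of_ne hx.1 fun h => ha.ne (h ▸ hgx)
  exact ⟨x, ⟨hax, hgx⟩, fun y ⟨hay, hgy⟩ =>
    hmono.injOn (hlt y hay hgy) hx (hgy.trans hgx.symm)⟩

theorem LipschitzOnWith.strictMonoOn_add_mul_cube_sub_one {f : ℝ → ℝ} {s : Set ℝ} {K : NNReal}
    {μ : ℝ} (hf : LipschitzOnWith K f s) (hs : s ⊆ Ici 1) (hK : K < 3 * μ) :
    StrictMonoOn (fun x => f x + μ * (x ^ 3 - 1)) s := by
  intro x hx y hy hxy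
  have hx₁ : 1 ≤ x := hs hx
  have hlip : f x - f y ≤ K * (y - x) := by
    have := hf.dist_le_mul x hx y hy
    rw [Real.dist_eq, Real.dist_eq, abs_sub_comm x y, abs_of_pos (sub_pos.2 hxy)] at this
    exact (le_abs_self _).trans this
  have hcube : 3 * (y - x) ≤ y ^ 3 - x ^ 3 := by
    have : 3 ≤ y ^ 2 + x * y + x ^ 2 := by nlinarith
    nlinarith [mul_le_mul_of_nonneg_left this (sub_pos.2 hxy).le]
  nlinarith [mul_lt_mul_of_pos_right hK (sub_pos.2 hxy), K.coe_nonneg]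

theorem one_div_sin_midpoint_le {a b : ℝ} (ha : a ∈ Ioo 0 π) (hb : b ∈ Ioo 0 π) :
    1 / sin ((a + b) / 2) ≤ (1 / sin a + 1 / sin b) / 2 := by
  have hsa := sin_pos_of_pos_of_lt_pi ha.1 ha.2
  have hsb := sin_pos_of_pos_of_lt_pi hb.1 hb.2
  have hconc : (sin a + sin b) / 2 ≤ sin ((a + b) / 2) := by
    have := strictConcaveOn_sin_Icc.concaveOn.2 (Ioo_subset_Icc_self ha) (Ioo_subset_Icc_self hb)
      (by norm_num : (0 : ℝ) ≤ 1 / 2) (by norm_num : (0 : ℝ) ≤ 1 / 2) (by norm_num)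
    simp only [smul_eq_mul] at this
    calc _ = 1 / 2 * sin a + 1 / 2 * sin b := by ring
      _ ≤ sin (1 / 2 * a + 1 / 2 * b) := this
      _ = _ := by ring_nf
  calc 1 / sin ((a + b) / 2) ≤ 1 / ((sin a + sin b) / 2) :=
        one_div_le_one_div_of_le (by positivity) hconc
    _ ≤ (1 / sin a + 1 / sin b) / 2 := by
        rw [div_add_div _ _ hsa.ne' hsb.ne', div_div,
          div_le_div_iff₀ (by positivity) (by positivity)]
        nlinarith [sq_nonneg (sin a - sin b)]

namespace Rosette

noncomputable def sum (n : ℕ) (ε x : ℝ) : ℝ :=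
  ∑ k ∈ Finset.Icc 1 n,
    (x * (1 - ε) - (1 - ε * x ^ 2) * cos (phi n k)) /
      (1 + x ^ 2 - 2 * x * cos (phi n k)) ^ ((3 : ℝ) / 2)

noncomputable def numerator (n : ℕ) (ε x : ℝ) : ℝ :=
  -((n : ℝ) * kn n) * (ε - x ^ 3) - x ^ 2 * sum n ε x

theorem h_eq_numerator_div {n : ℕ} {ε x : ℝ} :
    h n x ε = numerator n ε x / (1 - x ^ 3) := by
  unfold h numerator sum
  ring

theorem h_eq_iff {n : ℕ} {ε x μ : ℝ} (hx : 1 < x) :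
    h n x ε = μ ↔ numerator n ε x + μ * (x ^ 3 - 1) = 0 := by
  have : 1 - x ^ 3 < 0 := by nlinarith [one_lt_pow₀ hx (by norm_num : 3 ≠ 0)]
  rw [h_eq_numerator_div, div_eq_iff this.ne]
  constructor <;> intro he <;> linarith

theorem phi_div_two_mem_Ioo {n k : ℕ} (hk : k ∈ Finset.Icc 1 n) :
    phi n k / 2 ∈ Ioo 0 π := by
  rw [Finset.mem_Icc] at hk
  have hk1 : (1 : ℝ) ≤ k := by exact_mod_cast hk.1
  have hkn : (k : ℝ) ≤ n := by exact_mod_cast hk.2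
  have hn : (0 : ℝ) < n := by linarith
  unfold phi
  constructor
  · have : 0 < (2 * (k : ℝ) - 1) * π := mul_pos (by linarith) pi_pos
    positivity
  · rw [div_div, div_lt_iff₀ (by positivity)]
    nlinarith [pi_pos]

theorem cos_phi_eq_one_sub {n k : ℕ} : cos (phi n k) = 1 - 2 * sin (phi n k / 2) ^ 2 := by
  rw [← cos_two_mul_eq_one_sub, mul_div_cancel₀ _ two_ne_zero]

theorem cos_phi_lt_one {n k : ℕ} (hk : k ∈ Finset.Icc 1 n) : cos (phi n k) < 1 := by
  have hmem := phi_div_two_mem_Ioo hk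
  have := sin_pos_of_pos_of_lt_pi hmem.1 hmem.2
  rw [cos_phi_eq_one_sub]
  nlinarith

theorem kn_nonneg (n : ℕ) : 0 ≤ kn n := by
  unfold kn
  refine mul_nonneg (by positivity) (Finset.sum_nonneg fun k hk => ?_)
  rw [Finset.mem_Icc] at hk
  have hk1 : (1 : ℝ) ≤ k := by exact_mod_cast hk.1
  have hkn : (k : ℝ) + 1 ≤ n := by exact_mod_cast (by omega : k + 1 ≤ n)
  have : 0 < sin (k * π / n) := by
    apply sin_pos_of_pos_of_lt_pi
    · have : (0 : ℝ) < n := by linarith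
      positivity
    · rw [div_lt_iff₀ (by linarith)]
      nlinarith [pi_pos]
  positivity

theorem mul_one_add_sq_le {x u : ℝ} (hx : 0 ≤ x) (hu : |u| ≤ 1) :
    (1 - u) / 2 * (1 + x ^ 2) ≤ 1 + x ^ 2 - 2 * x * u := by
  obtain ⟨hu₁, hu₂⟩ := abs_le.1 hu
  nlinarith [mul_nonneg (by linarith : 0 ≤ 1 + u) (sq_nonneg (x - 1)),
    mul_nonneg hx (by linarith : 0 ≤ 1 - u)]

theorem abs_sub_mul_le {ε x u : ℝ} (hu : |u| ≤ 1) :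
    |x * (1 - ε) - (1 - ε * x ^ 2) * u| ≤ (1 + |ε| + |1 - ε|) * (1 + x ^ 2) := by
  have hx : |x| ≤ 1 + x ^ 2 := by
    nlinarith [abs_nonneg x, sq_abs x, sq_nonneg (|x| - 1)]
  have h₁ : |x * (1 - ε)| ≤ |1 - ε| * (1 + x ^ 2) := by
    rw [abs_mul, mul_comm]
    exact mul_le_mul_of_nonneg_left hx (abs_nonneg _)
  have h₂ : |(1 - ε * x ^ 2) * u| ≤ (1 + |ε|) * (1 + x ^ 2) := by
    rw [abs_mul]
    calc |1 - ε * x ^ 2| * |u| ≤ (1 + |ε| * x ^ 2) * 1 := by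
          gcongr
          exact (abs_sub _ _).trans (by rw [abs_one, abs_mul, abs_of_nonneg (sq_nonneg x)])
      _ ≤ (1 + |ε|) * (1 + x ^ 2) := by nlinarith [abs_nonneg ε, sq_nonneg x]
  calc _ ≤ |x * (1 - ε)| + |(1 - ε * x ^ 2) * u| := abs_sub _ _
    _ ≤ _ := by linarith

theorem abs_div_rpow_le {ε x u : ℝ} (hx : 0 ≤ x) (hu₁ : -1 ≤ u) (hu₂ : u < 1) :
    |(x * (1 - ε) - (1 - ε * x ^ 2) * u) / (1 + x ^ 2 - 2 * x * u) ^ ((3 : ℝ) / 2)| ≤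
      (1 + |ε| + |1 - ε|) / ((1 - u) / 2) ^ ((3 : ℝ) / 2) := by
  have hu : |u| ≤ 1 := abs_le.2 ⟨hu₁, hu₂.le⟩
  set c := (1 - u) / 2
  have hc : 0 < c := by simp only [c]; linarith
  have hQ := mul_one_add_sq_le hx hu
  have hx₂ : 1 ≤ 1 + x ^ 2 := by nlinarith [sq_nonneg x]
  have hden : c ^ ((3 : ℝ) / 2) * (1 + x ^ 2) ≤ (1 + x ^ 2 - 2 * x * u) ^ ((3 : ℝ) / 2) :=
    calc c ^ ((3 : ℝ) / 2) * (1 + x ^ 2)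
        ≤ c ^ ((3 : ℝ) / 2) * (1 + x ^ 2) ^ ((3 : ℝ) / 2) := by
          gcongr
          exact self_le_rpow_of_one_le hx₂ (by norm_num)
      _ = (c * (1 + x ^ 2)) ^ ((3 : ℝ) / 2) := (mul_rpow hc.le (by linarith)).symm
      _ ≤ _ := by gcongr
  have hc' : 0 < c ^ ((3 : ℝ) / 2) * (1 + x ^ 2) := by positivity
  have hQ' := hc'.trans_le hden
  rw [abs_div, abs_of_pos hQ', div_le_div_iff₀ hQ' (by positivity)]
  calc _ ≤ (1 + |ε| + |1 - ε|) * (1 + x ^ 2) * c ^ ((3 : ℝ) / 2) := by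
        gcongr
        exact abs_sub_mul_le hu
    _ = (1 + |ε| + |1 - ε|) * (c ^ ((3 : ℝ) / 2) * (1 + x ^ 2)) := by ring
    _ ≤ _ := by gcongr

theorem exists_abs_sum_le (n : ℕ) (ε : ℝ) : ∃ C, ∀ x, 0 ≤ x → |sum n ε x| ≤ C :=
  ⟨∑ k ∈ Finset.Icc 1 n, (1 + |ε| + |1 - ε|) / ((1 - cos (phi n k)) / 2) ^ ((3 : ℝ) / 2),
    fun _ hx => (Finset.abs_sum_le_sum_abs _ _).trans <| Finset.sum_le_sum fun _ hk =>
      abs_div_rpow_le hx (neg_one_le_cos _) (cos_phi_lt_one hk)⟩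

theorem contDiffOn_sum (n : ℕ) (ε : ℝ) : ContDiffOn ℝ 1 (sum n ε) (Ioi 0) := by
  refine ContDiffOn.sum fun k hk => ?_
  have hQ : ∀ x ∈ Ioi (0 : ℝ), 0 < 1 + x ^ 2 - 2 * x * cos (phi n k) := fun x hx =>
    (mul_pos (by linarith [cos_phi_lt_one hk]) (by positivity)).trans_le
      (mul_one_add_sq_le (le_of_lt hx) (abs_cos_le_one _))
  refine ContDiffOn.div (by fun_prop) ?_ fun x hx => (rpow_pos_of_pos (hQ x hx) _).ne'
  exact ContDiffOn.rpow_const_of_ne (by fun_prop) fun x hx => (hQ x hx).ne'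

theorem exists_lipschitzOnWith_numerator (n : ℕ) (ε : ℝ) :
    ∃ K, LipschitzOnWith K (numerator n ε) (Icc 1 2) := by
  have : ContDiffOn ℝ 1 (numerator n ε) (Ioi 0) :=
    (contDiffOn_const.mul (by fun_prop)).sub ((contDiffOn_id.pow 2).mul (contDiffOn_sum n ε))
  exact (this.mono fun x hx => zero_lt_one.trans_le hx.1).exists_lipschitzOnWith one_ne_zero
    (convex_Icc 1 2) isCompact_Icc

theorem sum_one_div_sin_lt {n : ℕ} (hn : 1 ≤ n) :
    ∑ j ∈ Finset.Icc 1 (n - 1), 1 / sin (j * π / n) <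
      ∑ k ∈ Finset.Icc 1 n, 1 / sin (phi n k / 2) := by
  obtain ⟨m, rfl⟩ : ∃ m, n = m + 1 := ⟨n - 1, by omega⟩
  set a : ℕ → ℝ := fun k => 1 / sin (phi (m + 1) k / 2)
  have ha : ∀ k ∈ Finset.Icc 1 (m + 1), 0 < a k := fun k hk => by
    have := phi_div_two_mem_Ioo hk
    exact one_div_pos.2 (sin_pos_of_pos_of_lt_pi this.1 this.2)
  have hmid : ∀ j ∈ Finset.Icc 1 m,
      1 / sin (j * π / ↑(m + 1)) ≤ (a j + a (j + 1)) / 2 := by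
    intro j hj
    have hj' := Finset.mem_Icc.1 hj
    have hconv := one_div_sin_midpoint_le
      (phi_div_two_mem_Ioo (n := m + 1) (Finset.mem_Icc.2 ⟨hj'.1, by omega⟩))
      (phi_div_two_mem_Ioo (n := m + 1) (k := j + 1) (Finset.mem_Icc.2 ⟨by omega, by omega⟩))
    convert hconv using 3
    unfold phi
    push_cast
    field_simp
    ring
  have htele := Finset.sum_Icc_add_add_one a m
  have ha₁ := ha 1 (Finset.mem_Icc.2 ⟨le_rfl, by omega⟩)
  have haₙ := ha (m + 1) (Finset.mem_Icc.2 ⟨by omega, le_rfl⟩)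
  rw [Nat.add_sub_cancel]
  calc _ ≤ ∑ j ∈ Finset.Icc 1 m, (a j + a (j + 1)) / 2 := Finset.sum_le_sum hmid
    _ = (∑ j ∈ Finset.Icc 1 m, (a j + a (j + 1))) / 2 := (Finset.sum_div _ _ _).symm
    _ < _ := by linarith

theorem sum_one (n : ℕ) (ε : ℝ) :
    sum n ε 1 = (1 - ε) / 4 * ∑ k ∈ Finset.Icc 1 n, 1 / sin (phi n k / 2) := by
  rw [sum, Finset.mul_sum]
  refine Finset.sum_congr rfl fun k hk => ?_
  have hmem := phi_div_two_mem_Ioo hk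
  set s := sin (phi n k / 2)
  have hs : 0 < s := sin_pos_of_pos_of_lt_pi hmem.1 hmem.2
  have hden : (1 + 1 ^ 2 - 2 * 1 * cos (phi n k)) ^ ((3 : ℝ) / 2) = (2 * s) ^ 3 := by
    rw [cos_phi_eq_one_sub, show 1 + (1 : ℝ) ^ 2 - 2 * 1 * (1 - 2 * s ^ 2) = (2 * s) ^ (2 : ℝ) by
      norm_cast; ring, ← rpow_mul (by positivity)]
    norm_num
  rw [hden, cos_phi_eq_one_sub]
  field_simp
  ring

theorem numerator_one_neg {n : ℕ} {ε : ℝ} (hn : 1 ≤ n) (hε : ε < 1) :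
    numerator n ε 1 < 0 := by
  have hkn : (n : ℝ) * kn n = (∑ j ∈ Finset.Icc 1 (n - 1), 1 / sin (j * π / n)) / 4 := by
    have : (n : ℝ) ≠ 0 := by positivity
    unfold kn
    field_simp
    exact Finset.sum_congr rfl fun _ _ => by ring_nf
  have := sum_one_div_sin_lt hn
  rw [numerator, sum_one, hkn]
  nlinarith

theorem numerator_add_pos {n : ℕ} {ε μ C x : ℝ} (hε : ε ≤ 1)
    (hC : ∀ y, 0 ≤ y → |sum n ε y| ≤ C) (hμ : C < μ) (hx : 2 ≤ x) :
    0 < numerator n ε x + μ * (x ^ 3 - 1) := by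
  have hS : sum n ε x ≤ C := (abs_le.1 (hC x (by linarith))).2
  have hx₈ : (2 : ℝ) ^ 3 ≤ x ^ 3 := pow_le_pow_left₀ (by norm_num) hx 3
  have hkn : 0 ≤ (n : ℝ) * kn n * (x ^ 3 - ε) :=
    mul_nonneg (mul_nonneg n.cast_nonneg (kn_nonneg n)) (by linarith)
  have hx₃ : x ^ 2 < x ^ 3 - 1 := by nlinarith
  have hC₀ : 0 ≤ C := (abs_nonneg _).trans (hC 0 le_rfl)
  unfold numerator
  nlinarith [mul_le_mul_of_nonneg_left hS (sq_nonneg x),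
    mul_lt_mul_of_pos_right hμ (by linarith : (0 : ℝ) < x ^ 3 - 1),
    mul_le_mul_of_nonneg_left hx₃.le hC₀]

end Rosette

open Rosette in
/-- For `n ≥ 2`, `ε ∈ (0,1)`, there exists `μ̂ > 0` such that for every `μ > μ̂`
the equation `h(x, ε) = μ` has exactly one solution `x ∈ (1, ∞)`. -/
theorem unique_cc_gt_one_for_large_mu (n : ℕ) (hn : 2 ≤ n) (ε : ℝ)
    (hε : ε ∈ Set.Ioo (0 : ℝ) 1) :
    ∃ muHat : ℝ, 0 < muHat ∧ ∀ μ : ℝ, muHat < μ →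
      ∃! x : ℝ, x ∈ Set.Ioi (1 : ℝ) ∧ h n x ε = μ := by
  obtain ⟨C, hC⟩ := exists_abs_sum_le n ε
  obtain ⟨K, hK⟩ := exists_lipschitzOnWith_numerator n ε
  refine ⟨max 1 (max C (K / 3)), zero_lt_one.trans_le (le_max_left _ _), fun μ hμ => ?_⟩
  have hCμ : C < μ := (le_max_left _ _).trans_lt ((le_max_right _ _).trans_lt hμ)
  have hKμ : (K : ℝ) < 3 * μ := by
    linarith [(le_max_right C (K / 3 : ℝ)).trans_lt ((le_max_right _ _).trans_lt hμ)]
  have hunique := existsUnique_zero_of_strictMonoOn one_le_two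
    (hK.continuousOn.add (by fun_prop))
    (hK.strictMonoOn_add_mul_cube_sub_one (fun _ hx => hx.1) hKμ)
    (by simpa using numerator_one_neg (by omega) hε.2)
    (fun x hx => numerator_add_pos hε.2.le hC hCμ hx)
  exact (existsUnique_congr fun x => and_congr_right fun hx => h_eq_iff hx).2 hunique
end
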